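/- Let f be a Boolean function on n variables with ANF coefficients a_f, and let g = (g_0,…,g_{n-1}) : 𝔽₂^m → 𝔽₂ⁿ be a vectorial Boolean function. If d_0,…,d_{n-1} ∈ ℤ ∪ {-∞} satisfy deg(g_i) ≤ d_i for all 0 ≤ i ≤ n-1, then the algebraic degree of the composite is bounded by the numeric mapping: deg(f ∘ g) ≤ max_{u : a_f(u) = 1} Σ_{i : u_i = 1} d_i (the empty sum is 0 and the maximum of the empty set is -∞). -/

import Mathlib

open Finset

section Core

variable {α : Type*}

/-- The monomial `x^u` over `𝔽₂`. -/
def monom [Fintype α] (u x : α → ZMod 2) : ZMod 2 :=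
  ∏ i, if u i = 1 then x i else 1

/-- The ANF coefficient of the monomial `x^u` in `f`, via Möbius inversion. -/
def anf [Fintype α] [DecidableEq α] (f : (α → ZMod 2) → ZMod 2) (u : α → ZMod 2) : ZMod 2 :=
  ∑ v ∈ Finset.univ.filter (fun v : α → ZMod 2 => ∀ i, v i = 1 → u i = 1), f v

/-- Hamming weight. -/
def wt [Fintype α] (u : α → ZMod 2) : ℕ :=
  (Finset.univ.filter (fun i => u i = 1)).card

/-- Algebraic degree, in `ℤ ∪ {-∞}`. -/
def deg [Fintype α] [DecidableEq α] (f : (α → ZMod 2) → ZMod 2) : WithBot ℤ :=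
  (Finset.univ.filter (fun u : α → ZMod 2 => anf f u = 1)).sup
    (fun u => ((wt u : ℤ) : WithBot ℤ))

/-- Combine an assignment on `I` with one on `Iᶜ` to a full assignment. -/
def combine [Fintype α] [DecidableEq α] (I : Finset α) (w : ↥I → ZMod 2)
    (y : ↥Iᶜ → ZMod 2) : α → ZMod 2 :=
  fun i => if h : i ∈ I then w ⟨i, h⟩ else y ⟨i, Finset.mem_compl.mpr h⟩

/-- The coefficient function `g_{f,w}` of `x_I^w` in `f`, a Boolean function of `x_{Iᶜ}`. -/
def coeffFun [Fintype α] [DecidableEq α] (f : (α → ZMod 2) → ZMod 2) (I : Finset α)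
    (w : ↥I → ZMod 2) : (↥Iᶜ → ZMod 2) → ZMod 2 :=
  fun y => ∑ t : ↥Iᶜ → ZMod 2, anf f (combine I w t) * monom t y

/-- The vector degree of `f` w.r.t. the index set `I`. -/
def vdeg [Fintype α] [DecidableEq α] (f : (α → ZMod 2) → ZMod 2) (I : Finset α)
    (w : ↥I → ZMod 2) : WithBot ℤ :=
  deg (coeffFun f I w)

/-- `f` with the variables outside `S` set to `0`. -/
def restrict0 [Fintype α] [DecidableEq α] (f : (α → ZMod 2) → ZMod 2) (S : Finset α) :
    (α → ZMod 2) → ZMod 2 :=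
  fun x => f (fun i => if i ∈ S then x i else 0)

/-- Combine an assignment on `I₁` with one on `I₂ \ I₁` to an assignment on `I₂`. -/
def joinFn [DecidableEq α] {I₁ I₂ : Finset α} (w : ↥I₁ → ZMod 2)
    (w' : ↥(I₂ \ I₁) → ZMod 2) : ↥I₂ → ZMod 2 :=
  fun j => if h : (j : α) ∈ I₁ then w ⟨(j : α), h⟩
           else w' ⟨(j : α), Finset.mem_sdiff.mpr ⟨j.2, h⟩⟩

end Core

/-- Coordinatewise OR of the family `W i`, over indices `i` with `u i = 1`. -/
def orFam {n : ℕ} {β : Type*} (u : Fin n → ZMod 2) (W : Fin n → β → ZMod 2) :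
    β → ZMod 2 :=
  fun j => if ∃ i, u i = 1 ∧ W i j = 1 then 1 else 0

/-- The vector numeric mapping `VDEG_d(f, V)`. -/
def VDEG {n : ℕ} {δ : Type*} [Fintype δ] [DecidableEq δ]
    (f : (Fin n → ZMod 2) → ZMod 2) (V : Fin n → (δ → ZMod 2) → WithBot ℤ)
    (w : δ → ZMod 2) : WithBot ℤ :=
  (Finset.univ.filter (fun p : (Fin n → ZMod 2) × (Fin n → δ → ZMod 2) =>
      anf f p.1 = 1 ∧ (∀ i, p.1 i = 0 → p.2 i = 0) ∧ w = orFam p.1 p.2)).sup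
    (fun p => ∑ i ∈ Finset.univ.filter (fun i => p.1 i = 1), V i (p.2 i))

/-- Monomial transition `π_u(x) → π_v(g(x))`. -/
def MonTrans {a b : ℕ} (g : (Fin a → ZMod 2) → (Fin b → ZMod 2))
    (u : Fin a → ZMod 2) (v : Fin b → ZMod 2) : Prop :=
  anf (fun x => monom v (g x)) u = 1

/-- Monomial trails from level `a` to level `b`, with fixed endpoints `u`, `v`
(trails are normalized to be `0` outside the levels `a, …, b`). -/
def Trails (n : ℕ → ℕ) (f : ∀ i, (Fin (n i) → ZMod 2) → (Fin (n (i + 1)) → ZMod 2))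
    (a b : ℕ) (u : Fin (n a) → ZMod 2) (v : Fin (n b) → ZMod 2) :
    Set (∀ i, Fin (n i) → ZMod 2) :=
  {t | t a = u ∧ t b = v ∧ (∀ i, a ≤ i → i < b → MonTrans (f i) (t i) (t (i + 1))) ∧
       (∀ i, i < a → t i = fun _ => 0) ∧ (∀ i, b < i → t i = fun _ => 0)}

/-- The iterated composition `f_{b-1} ∘ ⋯ ∘ f_a` (meaningful for `a ≤ b`). -/
def iterComp (n : ℕ → ℕ) (f : ∀ i, (Fin (n i) → ZMod 2) → (Fin (n (i + 1)) → ZMod 2))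
    (a : ℕ) : (b : ℕ) → (Fin (n a) → ZMod 2) → (Fin (n b) → ZMod 2)
  | 0 => fun x j => if h : a = 0 then x (Fin.cast (show n 0 = n a by rw [h]) j) else 0
  | b + 1 =>
      if h : a = b + 1 then fun x j => x (Fin.cast (show n (b + 1) = n a by rw [h]) j)
      else fun x => f b (iterComp n f a b x)

section Iterated

/-- Embed an index set `J ⊆ {0,…,n-1}` into the joint index set of size `n' 0 = n + m`. -/
def liftJ {n m N0 : ℕ} (h0 : N0 = n + m) (J : Finset (Fin n)) : Finset (Fin N0) :=
  J.image (fun (j : Fin n) => (⟨j.val, by have := j.isLt; omega⟩ : Fin N0))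

/-- Set the `x`-variables outside `S` to zero in a joint assignment. -/
def mask0 {n m N0 : ℕ} (h0 : N0 = n + m) (S : Finset (Fin n)) (z : Fin N0 → ZMod 2) :
    Fin N0 → ZMod 2 :=
  fun i => if h : (i : ℕ) < n then (if (⟨(i : ℕ), h⟩ : Fin n) ∈ S then z i else 0) else z i

/-- The iterated estimated vector degrees `V_t^S`. -/
def Vt {n m : ℕ} (n' : ℕ → ℕ) (h0 : n' 0 = n + m)
    (f : ∀ t, (Fin (n' t) → ZMod 2) → (Fin (n' (t + 1)) → ZMod 2))
    (J S : Finset (Fin n)) :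
    (t : ℕ) → Fin (n' (t + 1)) → (↥(liftJ h0 J) → ZMod 2) → WithBot ℤ
  | 0 => fun i => vdeg (fun z => f 0 (mask0 h0 S z) i) (liftJ h0 J)
  | t + 1 => fun i => VDEG (fun y => f (t + 1) y i) (Vt n' h0 f J S t)

/-- The estimated vector degree `vdeg-hat^S` (here `r = s + 2`). -/
def vdegHat {n m : ℕ} (n' : ℕ → ℕ) (h0 : n' 0 = n + m)
    (f : ∀ t, (Fin (n' t) → ZMod 2) → (Fin (n' (t + 1)) → ZMod 2))
    (J : Finset (Fin n)) (s : ℕ) (S : Finset (Fin n)) :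
    (↥(liftJ h0 J) → ZMod 2) → WithBot ℤ :=
  VDEG (fun y => monom (fun _ => 1) (f (s + 1) y)) (Vt n' h0 f J S s)

/-- The estimated degree `deg-hat^S`. -/
noncomputable def degHat {n m : ℕ} (n' : ℕ → ℕ) (h0 : n' 0 = n + m)
    (f : ∀ t, (Fin (n' t) → ZMod 2) → (Fin (n' (t + 1)) → ZMod 2))
    (J : Finset (Fin n)) (s : ℕ) (S : Finset (Fin n)) : WithBot ℤ :=
  Finset.univ.sup (fun w : ↥(liftJ h0 J) → ZMod 2 =>
    vdegHat n' h0 f J s S w + ((wt w : ℤ) : WithBot ℤ))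

end Iterated

/-! Expanding `f` in its ANF gives `f ∘ g = ∑_{a_f(u) = 1} ∏_{u_i = 1} g_i`. The degree of a
sum is at most the largest degree of a summand, and the degree of a product at most the sum of
the degrees of its factors, since `x^u x^v = x^(u ∨ v)` and `wt (u ∨ v) ≤ wt u + wt v`. -/

section Monomials

variable {α : Type*} [Fintype α]

lemma monom_eq_ite (u x : α → ZMod 2) :
    monom u x = if ∀ i, u i = 1 → x i = 1 then 1 else 0 := by
  have hcoord : ∀ a b : ZMod 2, (if a = 1 then b else 1) = if a = 1 → b = 1 then 1 else 0 := by
    decide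
  simp only [monom, hcoord, Finset.prod_boole, Finset.mem_univ, true_implies]

lemma monom_zero_left : monom (0 : α → ZMod 2) = 1 := by
  funext x
  simp [monom]

/-- Over `𝔽₂`, `u + v + u * v` is the coordinatewise OR of `u` and `v`. -/
lemma monom_mul (u v x : α → ZMod 2) :
    monom u x * monom v x = monom (u + v + u * v) x := by
  have hcoord : ∀ a b c : ZMod 2,
      (if a = 1 then c else 1) * (if b = 1 then c else 1) =
        if a + b + a * b = 1 then c else 1 := by
    decide
  simp only [monom, ← Finset.prod_mul_distrib, hcoord, Pi.add_apply, Pi.mul_apply]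

lemma wt_add_add_mul_le (u v : α → ZMod 2) : wt (u + v + u * v) ≤ wt u + wt v := by
  classical
  have hcoord : ∀ a b : ZMod 2, a + b + a * b = 1 → a = 1 ∨ b = 1 := by decide
  calc wt (u + v + u * v)
      ≤ (Finset.univ.filter (fun i => u i = 1) ∪ Finset.univ.filter (fun i => v i = 1)).card :=
        Finset.card_le_card fun i hi => by simpa using hcoord _ _ (Finset.mem_filter.mp hi).2
    _ ≤ wt u + wt v := Finset.card_union_le _ _

end Monomials

section ANF

variable {α : Type*} [Fintype α] [DecidableEq α]

lemma anf_eq_sum_monom (f : (α → ZMod 2) → ZMod 2) (u : α → ZMod 2) :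
    anf f u = ∑ v, monom v u * f v := by
  simp only [anf, Finset.sum_filter, monom_eq_ite, ite_mul, one_mul, zero_mul]

lemma anf_sum {ι : Type*} (s : Finset ι) (F : ι → (α → ZMod 2) → ZMod 2) (u : α → ZMod 2) :
    anf (∑ i ∈ s, F i) u = ∑ i ∈ s, anf (F i) u := by
  simp only [anf, Finset.sum_apply]
  exact Finset.sum_comm

/-- Both the ANF sum and the monomial factor over the coordinates, and coordinate `i`
contributes `[u i = v i]`. -/
lemma anf_monom (v u : α → ZMod 2) : anf (monom v) u = if u = v then 1 else 0 := by
  have hcoord : ∀ a b : ZMod 2,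
      ∑ c : ZMod 2, (if c = 1 then a else 1) * (if b = 1 then c else 1) =
        if a = b then 1 else 0 := by
    decide
  simp only [anf_eq_sum_monom, monom, ← Finset.prod_mul_distrib]
  rw [← Fintype.prod_sum (fun i c => (if c = 1 then u i else 1) * (if v i = 1 then c else 1))]
  simp only [hcoord, Finset.prod_boole, Finset.mem_univ, true_implies, funext_iff]

lemma sum_anf_mul_monom (f : (α → ZMod 2) → ZMod 2) (x : α → ZMod 2) :
    ∑ u, anf f u * monom u x = f x := by
  simp only [anf_eq_sum_monom, Finset.sum_mul, mul_right_comm _ (f _)]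
  rw [Finset.sum_comm]
  simp only [← Finset.sum_mul, mul_comm (monom _ _) (monom _ x), ← anf_eq_sum_monom, anf_monom,
    ite_mul, one_mul, zero_mul, Finset.sum_ite_eq, Finset.mem_univ, if_true]

lemma eq_sum_monom_anf (f : (α → ZMod 2) → ZMod 2) :
    f = ∑ u ∈ Finset.univ.filter (fun u => anf f u = 1), monom u := by
  have hcoeff : ∀ (a : ZMod 2) (b : ZMod 2), a * b = if a = 1 then b else 0 := by decide
  funext x
  rw [← sum_anf_mul_monom f x, Finset.sum_apply, Finset.sum_filter]
  exact Finset.sum_congr rfl fun u _ => hcoeff _ _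

end ANF

section Degree

variable {α : Type*} [Fintype α] [DecidableEq α]

lemma deg_le_iff (f : (α → ZMod 2) → ZMod 2) (D : WithBot ℤ) :
    deg f ≤ D ↔ ∀ u, anf f u = 1 → ((wt u : ℤ) : WithBot ℤ) ≤ D := by
  simp [deg, Finset.sup_le_iff]

lemma wt_le_deg {f : (α → ZMod 2) → ZMod 2} {u : α → ZMod 2} (hu : anf f u = 1) :
    ((wt u : ℤ) : WithBot ℤ) ≤ deg f :=
  Finset.le_sup (f := fun u => ((wt u : ℤ) : WithBot ℤ)) (by simpa using hu)

lemma deg_monom_le (v : α → ZMod 2) : deg (monom v) ≤ ((wt v : ℤ) : WithBot ℤ) := by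
  rw [deg_le_iff]
  intro u hu
  rw [anf_monom] at hu
  split_ifs at hu with huv
  · rw [huv]
  · exact absurd hu zero_ne_one

lemma deg_one_le : deg (1 : (α → ZMod 2) → ZMod 2) ≤ 0 := by
  simpa [monom_zero_left, wt] using deg_monom_le (0 : α → ZMod 2)

lemma deg_sum_le {ι : Type*} (s : Finset ι) (F : ι → (α → ZMod 2) → ZMod 2) :
    deg (∑ i ∈ s, F i) ≤ s.sup fun i => deg (F i) := by
  rw [deg_le_iff]
  intro u hu
  rw [anf_sum] at hu
  obtain ⟨i, hi, hFi⟩ := Finset.exists_ne_zero_of_sum_ne_zero (hu ▸ one_ne_zero)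
  exact (wt_le_deg (Fin.eq_one_of_ne_zero _ hFi)).trans (Finset.le_sup (f := fun i => deg (F i)) hi)

lemma deg_mul_le (f g : (α → ZMod 2) → ZMod 2) : deg (f * g) ≤ deg f + deg g := by
  have hfg : f * g =
      ∑ p ∈ univ.filter (fun u => anf f u = 1) ×ˢ univ.filter (fun v => anf g v = 1),
        monom (p.1 + p.2 + p.1 * p.2) := by
    conv_lhs => rw [eq_sum_monom_anf f, eq_sum_monom_anf g]
    funext x
    simp only [Finset.sum_mul_sum, Finset.sum_product, Pi.mul_apply, Finset.sum_apply, monom_mul]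
  rw [hfg]
  refine (deg_sum_le _ _).trans (Finset.sup_le fun p hp => ?_)
  obtain ⟨hu, hv⟩ := Finset.mem_product.mp hp
  calc deg (monom (p.1 + p.2 + p.1 * p.2))
      ≤ ((wt (p.1 + p.2 + p.1 * p.2) : ℤ) : WithBot ℤ) := deg_monom_le _
    _ ≤ ((wt p.1 : ℤ) : WithBot ℤ) + ((wt p.2 : ℤ) : WithBot ℤ) := by
        exact_mod_cast wt_add_add_mul_le p.1 p.2
    _ ≤ deg f + deg g :=
        add_le_add (wt_le_deg (Finset.mem_filter.mp hu).2) (wt_le_deg (Finset.mem_filter.mp hv).2)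

lemma deg_prod_le {ι : Type*} (s : Finset ι) (F : ι → (α → ZMod 2) → ZMod 2) :
    deg (∏ i ∈ s, F i) ≤ ∑ i ∈ s, deg (F i) := by
  classical
  induction s using Finset.induction with
  | empty => rw [Finset.prod_empty, Finset.sum_empty]; exact deg_one_le
  | insert i s hi ih =>
      rw [Finset.prod_insert hi, Finset.sum_insert hi]
      exact (deg_mul_le _ _).trans (add_le_add le_rfl ih)

end Degree

lemma comp_eq_sum_prod {α β : Type*} [Fintype α] [DecidableEq α] (f : (α → ZMod 2) → ZMod 2)
    (g : β → α → ZMod 2) :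
    (fun x => f (g x)) = ∑ u ∈ Finset.univ.filter (fun u => anf f u = 1),
      ∏ i ∈ Finset.univ.filter (fun i => u i = 1), fun x => g x i := by
  funext x
  conv_lhs => rw [eq_sum_monom_anf f]
  simp only [Finset.sum_apply, Finset.prod_apply]
  simp only [monom, Finset.prod_filter]

/-- The numeric mapping bounds the degree of a composite: if
`deg(g_i) ≤ d_i`, then `deg(f ∘ g) ≤ max_{u : a_f(u) = 1} Σ_{i : u_i = 1} d_i`. -/
theorem deg_comp_le_numeric {m n : ℕ} (f : (Fin n → ZMod 2) → ZMod 2)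
    (g : (Fin m → ZMod 2) → (Fin n → ZMod 2)) (d : Fin n → WithBot ℤ)
    (hd : ∀ i, deg (fun x => g x i) ≤ d i) :
    deg (fun x => f (g x)) ≤
      (Finset.univ.filter (fun u : Fin n → ZMod 2 => anf f u = 1)).sup
        (fun u => ∑ i ∈ Finset.univ.filter (fun i => u i = 1), d i) := by
  rw [comp_eq_sum_prod]
  refine (deg_sum_le _ _).trans (Finset.sup_mono_fun fun u _ => ?_)
  exact (deg_prod_le _ _).trans (Finset.sum_le_sum fun i _ => hd i)
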